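/- The companion poly-Bernoulli polynomials satisfy C_n^{(k)}(z) = (1/(n+1)) ∑_{l=0}^n C(n+1, l+1) B_{n-l}(z) C_l^{(k-1)}, for k ≥ 2 and n ≥ 0. -/

import Mathlib

/-- Generating function `Li_k(1-e^{-t})/(1-e^{-t})` of the poly-Bernoulli numbers,
as a formal power series over `ℚ` (coefficientwise: `∑_{m≥1} (1-e^{-t})^{m-1}/m^k`). -/
noncomputable def pbGF (k : ℕ) : PowerSeries ℚ :=
  PowerSeries.mk fun n => ∑ m ∈ Finset.range (n + 1),
    ((m + 1 : ℚ) ^ k)⁻¹ *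
      PowerSeries.coeff (R := ℚ) n ((1 - PowerSeries.rescale (-1) (PowerSeries.exp ℚ)) ^ m)

/-- Poly-Bernoulli numbers `B_n^{(k)}`. -/
noncomputable def polyBernoulliNum (k n : ℕ) : ℚ :=
  (Nat.factorial n : ℚ) * PowerSeries.coeff (R := ℚ) n (pbGF k)

/-- Generating function `Li_k(1-e^{-t})/(e^t-1) = e^{-t}·Li_k(1-e^{-t})/(1-e^{-t})`. -/
noncomputable def cGF (k : ℕ) : PowerSeries ℚ :=
  PowerSeries.rescale (-1) (PowerSeries.exp ℚ) * pbGF k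

/-- Companion poly-Bernoulli numbers `C_n^{(k)}`. -/
noncomputable def polyCNum (k n : ℕ) : ℚ :=
  (Nat.factorial n : ℚ) * PowerSeries.coeff (R := ℚ) n (cGF k)

/-- Poly-Bernoulli polynomials `B_n^{(k)}(z)` (EGF `e^{zt}·Li_k(1-e^{-t})/(1-e^{-t})`). -/
noncomputable def polyBernoulliPoly (k n : ℕ) (z : ℚ) : ℚ :=
  ∑ j ∈ Finset.range (n + 1), (n.choose j : ℚ) * polyBernoulliNum k j * z ^ (n - j)

/-- Companion poly-Bernoulli polynomials `C_n^{(k)}(z)` (EGF `e^{zt}·Li_k(1-e^{-t})/(e^t-1)`). -/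
noncomputable def polyCPoly (k n : ℕ) (z : ℚ) : ℚ :=
  ∑ j ∈ Finset.range (n + 1), (n.choose j : ℚ) * polyCNum k j * z ^ (n - j)

open PowerSeries Finset Nat

/-- `e^{-t}` as a power series. -/
noncomputable def expNeg : PowerSeries ℚ := PowerSeries.rescale (-1) (PowerSeries.exp ℚ)

lemma coeff_expNeg (n : ℕ) : PowerSeries.coeff (R := ℚ) n expNeg = (-1) ^ n * (1 / n !) := by
  simp [expNeg, coeff_rescale, coeff_exp, Algebra.algebraMap_self]

/-- Partial sums of the polylog generating function. -/
noncomputable def Tser (k N : ℕ) : PowerSeries ℚ :=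
  ∑ m ∈ Finset.range N, ((m + 1 : ℚ) ^ k)⁻¹ • (1 - expNeg) ^ m

/-- Partial sums of the `Li_k(1-e^{-t})` series. -/
noncomputable def Sser (k N : ℕ) : PowerSeries ℚ :=
  ∑ m ∈ Finset.range N, ((m + 1 : ℚ) ^ k)⁻¹ • (1 - expNeg) ^ (m + 1)

lemma constantCoeff_one_sub_expNeg : PowerSeries.constantCoeff (R := ℚ) (1 - expNeg) = 0 := by
  have : PowerSeries.constantCoeff (R := ℚ) expNeg = 1 := by
    simpa using coeff_expNeg 0
  simp [this]

lemma coeff_one_sub_expNeg_pow {i m : ℕ} (h : i < m) :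
    PowerSeries.coeff (R := ℚ) i ((1 - expNeg) ^ m) = 0 := by
  obtain ⟨g, hg⟩ : (PowerSeries.X : PowerSeries ℚ) ^ m ∣ (1 - expNeg) ^ m :=
    pow_dvd_pow_of_dvd (PowerSeries.X_dvd_iff.2 constantCoeff_one_sub_expNeg) m
  rw [hg, PowerSeries.coeff_X_pow_mul', if_neg (by omega)]

lemma coeff_pbGF_eq_Tser (k n N : ℕ) (h : n < N) :
    PowerSeries.coeff (R := ℚ) n (pbGF k) = PowerSeries.coeff (R := ℚ) n (Tser k N) := by
  rw [pbGF, PowerSeries.coeff_mk, Tser, map_sum]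
  simp only [map_smul, smul_eq_mul]
  rw [show (1 - PowerSeries.rescale (-1) (PowerSeries.exp ℚ)) = 1 - expNeg from rfl]
  exact Finset.sum_subset (Finset.range_subset_range.2 h)
    (fun m hm hm' => by
      rw [coeff_one_sub_expNeg_pow (by simp at hm'; omega), mul_zero])

lemma coeff_mul_congr (f g h : PowerSeries ℚ) (n : ℕ)
    (H : ∀ i ≤ n, PowerSeries.coeff (R := ℚ) i f = PowerSeries.coeff (R := ℚ) i g) :
    PowerSeries.coeff (R := ℚ) n (h * f) = PowerSeries.coeff (R := ℚ) n (h * g) := by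
  rw [PowerSeries.coeff_mul, PowerSeries.coeff_mul]
  refine Finset.sum_congr rfl fun p hp => ?_
  rw [Finset.HasAntidiagonal.mem_antidiagonal] at hp
  rw [H p.2 (by omega)]

lemma one_sub_mul_Tser (k N : ℕ) : (1 - expNeg) * Tser k N = Sser k N := by
  rw [Tser, Sser, Finset.mul_sum]
  exact Finset.sum_congr rfl fun m _ => by
    rw [mul_smul_comm, pow_succ, mul_comm]

lemma coeff_one_sub_mul_pbGF (k n N : ℕ) (h : n < N) :
    PowerSeries.coeff (R := ℚ) n ((1 - expNeg) * pbGF k) = PowerSeries.coeff (R := ℚ) n (Sser k N) := by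
  rw [← one_sub_mul_Tser]
  exact coeff_mul_congr _ _ _ _ fun i hi => coeff_pbGF_eq_Tser k i N (by omega)

lemma deriv_expNeg : d⁄dX ℚ expNeg = -expNeg := by
  ext n
  rw [PowerSeries.coeff_derivative, map_neg, coeff_expNeg, coeff_expNeg,
    Nat.factorial_succ]
  have h0 : ((n ! : ℚ)) ≠ 0 := Nat.cast_ne_zero.2 n.factorial_ne_zero
  push_cast
  field_simp
  ring

lemma deriv_one_sub_expNeg : d⁄dX ℚ (1 - expNeg) = expNeg := by
  rw [map_sub, deriv_expNeg]
  simp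

lemma deriv_Sser (k N : ℕ) (hk : 1 ≤ k) :
    d⁄dX ℚ (Sser k N) = expNeg * Tser (k - 1) N := by
  rw [Sser, map_sum, Tser, Finset.mul_sum]
  refine Finset.sum_congr rfl fun m _ => ?_
  rw [Derivation.map_smul, Derivation.leibniz_pow, deriv_one_sub_expNeg, Nat.add_sub_cancel]
  have hm : ((m : ℚ) + 1) ≠ 0 := by positivity
  have hc : ((m + 1 : ℚ) ^ k)⁻¹ * (m + 1) = ((m + 1 : ℚ) ^ (k - 1))⁻¹ := by
    rw [show k = (k - 1) + 1 from (Nat.succ_pred_eq_of_pos hk).symm, pow_succ, mul_inv, Nat.add_sub_cancel]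
    field_simp
  simp only [smul_eq_mul, nsmul_eq_mul, PowerSeries.smul_eq_C_mul,
    ← map_natCast (PowerSeries.C (R := ℚ)) (m + 1)]
  have hC : (PowerSeries.C (R := ℚ)) ((m + 1 : ℕ) : ℚ) * (PowerSeries.C (R := ℚ)) ((m + 1 : ℚ) ^ k)⁻¹ =
      (PowerSeries.C (R := ℚ)) ((m + 1 : ℚ) ^ (k - 1))⁻¹ := by
    rw [← map_mul]
    congr 1
    push_cast
    rw [mul_comm, hc]
  rw [← hC]
  ring

lemma coeff_L_succ (k l : ℕ) (hk : 1 ≤ k) :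
    PowerSeries.coeff (R := ℚ) (l + 1) ((1 - expNeg) * pbGF k) =
      PowerSeries.coeff (R := ℚ) l (cGF (k - 1)) / (l + 1) := by
  have h1 := coeff_one_sub_mul_pbGF k (l + 1) (l + 2) (by omega)
  have h2 : PowerSeries.coeff (R := ℚ) l (d⁄dX ℚ (Sser k (l + 2))) =
      PowerSeries.coeff (R := ℚ) (l + 1) (Sser k (l + 2)) * (l + 1) :=
    PowerSeries.coeff_derivative _ _
  have h3 : PowerSeries.coeff (R := ℚ) l (expNeg * Tser (k - 1) (l + 2)) =
      PowerSeries.coeff (R := ℚ) l (cGF (k - 1)) := by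
    rw [cGF]
    rw [show PowerSeries.rescale (-1) (PowerSeries.exp ℚ) = expNeg from rfl]
    exact coeff_mul_congr _ _ _ _ fun i hi => (coeff_pbGF_eq_Tser (k - 1) i (l + 2) (by omega)).symm
  rw [deriv_Sser k (l + 2) hk, h3] at h2
  have hl : ((l : ℚ) + 1) ≠ 0 := by positivity
  rw [h1]
  field_simp
  linarith [h2]

lemma coeff_zero_L (k : ℕ) :
    PowerSeries.coeff (R := ℚ) 0 ((1 - expNeg) * pbGF k) = 0 := by
  rw [PowerSeries.coeff_zero_eq_constantCoeff, map_mul, constantCoeff_one_sub_expNeg, zero_mul]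

lemma key_eq (k : ℕ) (z : ℚ) :
    (PowerSeries.mk fun n => Polynomial.aeval z ((1 / n ! : ℚ) • Polynomial.bernoulli n)) *
        ((1 - expNeg) * pbGF k) =
      PowerSeries.X * PowerSeries.rescale z (PowerSeries.exp ℚ) * cGF k := by
  have h1 : PowerSeries.exp ℚ * expNeg = 1 := PowerSeries.exp_mul_exp_neg_eq_one
  have h2 : (PowerSeries.exp ℚ - 1) * expNeg = 1 - expNeg := by
    rw [sub_mul, h1, one_mul]
  calc (PowerSeries.mk fun n => Polynomial.aeval z ((1 / n ! : ℚ) • Polynomial.bernoulli n)) *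
        ((1 - expNeg) * pbGF k)
      = ((PowerSeries.mk fun n => Polynomial.aeval z ((1 / n ! : ℚ) • Polynomial.bernoulli n)) *
          (PowerSeries.exp ℚ - 1)) * (expNeg * pbGF k) := by rw [← h2]; ring
    _ = PowerSeries.X * PowerSeries.rescale z (PowerSeries.exp ℚ) * cGF k := by
        rw [Polynomial.bernoulli_generating_function, cGF]
        rfl

/-- Connection relation:
`C_n^{(k)}(z) = (1/(n+1)) ∑_{l=0}^n C(n+1,l+1) B_{n-l}(z) C_l^{(k-1)}`
for `k ≥ 2`, `n ≥ 0`. -/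
theorem polyCPoly_connection (k : ℕ) (hk : 2 ≤ k) (n : ℕ) (z : ℚ) :
    polyCPoly k n z =
      (1 / (n + 1 : ℚ)) * ∑ l ∈ Finset.range (n + 1), ((n + 1).choose (l + 1) : ℚ) *
        Polynomial.eval z (Polynomial.bernoulli (n - l)) * polyCNum (k - 1) l := by
  have key := congrArg (PowerSeries.coeff (R := ℚ) (n + 1)) (key_eq k z)
  -- right side: coeff (n+1) (X * (rescale z exp * cGF k)) = coeff n (rescale z exp * cGF k)
  have hR : PowerSeries.coeff (R := ℚ) (n + 1)
      (PowerSeries.X * PowerSeries.rescale z (PowerSeries.exp ℚ) * cGF k) * n ! =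
      polyCPoly k n z := by
    rw [mul_assoc, PowerSeries.coeff_succ_X_mul, PowerSeries.coeff_mul,
      Finset.Nat.sum_antidiagonal_eq_sum_range_succ_mk, Finset.sum_mul, polyCPoly]
    conv_rhs => rw [← Finset.sum_range_reflect]
    refine Finset.sum_congr rfl fun i hi => ?_
    rw [Finset.mem_range] at hi
    have hi' : i ≤ n := by omega
    simp only [coeff_rescale, coeff_exp, Algebra.algebraMap_self, RingHom.id_apply]
    rw [show n + 1 - 1 - i = n - i from by omega, Nat.sub_sub_self hi', polyCNum,
      Nat.cast_choose ℚ (Nat.sub_le n i), Nat.sub_sub_self hi']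
    have h1 : ((i ! : ℚ)) ≠ 0 := Nat.cast_ne_zero.2 i.factorial_ne_zero
    have h2 : (((n - i)! : ℚ)) ≠ 0 := Nat.cast_ne_zero.2 (n - i).factorial_ne_zero
    field_simp
  have hL : PowerSeries.coeff (R := ℚ) (n + 1)
      ((PowerSeries.mk fun m => Polynomial.aeval z ((1 / m ! : ℚ) • Polynomial.bernoulli m)) *
        ((1 - expNeg) * pbGF k)) * n ! =
      (1 / (n + 1 : ℚ)) * ∑ l ∈ Finset.range (n + 1), ((n + 1).choose (l + 1) : ℚ) *
        Polynomial.eval z (Polynomial.bernoulli (n - l)) * polyCNum (k - 1) l := by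
    rw [PowerSeries.coeff_mul, Finset.Nat.sum_antidiagonal_eq_sum_range_succ_mk,
      Finset.sum_range_succ]
    rw [show n + 1 - (n + 1) = 0 from by omega, coeff_zero_L, mul_zero, add_zero,
      Finset.sum_mul, Finset.mul_sum]
    conv_lhs => rw [← Finset.sum_range_reflect]
    refine Finset.sum_congr rfl fun l hl => ?_
    rw [Finset.mem_range] at hl
    have hl' : l ≤ n := by omega
    simp only []
    rw [show n + 1 - 1 - l = n - l from by omega, show n + 1 - (n - l) = l + 1 from by omega,
      coeff_L_succ k l (by omega), PowerSeries.coeff_mk, polyCNum,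
      Nat.cast_choose ℚ (by omega : l + 1 ≤ n + 1),
      show n + 1 - (l + 1) = n - l from by omega]
    have e1 : Polynomial.aeval z ((1 / ((n - l)! : ℚ)) • Polynomial.bernoulli (n - l)) =
        (1 / ((n - l)! : ℚ)) * Polynomial.eval z (Polynomial.bernoulli (n - l)) := by
      rw [map_smul, smul_eq_mul, Polynomial.coe_aeval_eq_eval]
    rw [e1, Nat.factorial_succ, Nat.factorial_succ]
    have h1 : ((l ! : ℚ)) ≠ 0 := Nat.cast_ne_zero.2 l.factorial_ne_zero
    have h2 : (((n - l)! : ℚ)) ≠ 0 := Nat.cast_ne_zero.2 (n - l).factorial_ne_zero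
    have h3 : ((l : ℚ) + 1) ≠ 0 := by positivity
    have h4 : ((n : ℚ) + 1) ≠ 0 := by positivity
    have h5 : ((n ! : ℚ)) ≠ 0 := Nat.cast_ne_zero.2 n.factorial_ne_zero
    push_cast
    field_simp
  rw [← hR, ← key, hL]
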